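/- Let g be a positive integer, τ ∈ ℍ_g, k', k'' positive integers, c', d', c'', d'' ∈ ℝ^g, and z ∈ ℂ^g. Then ϑ[c'/k', d'](k'τ, k'z) · ϑ[c''/k'', d''](k''τ, k''z) = Σ_{w ∈ {0,…,k'+k''−1}^g} ϑ[(k'k''w + k''c' − k'c'')/(k'k''(k'+k'')), k''d' − k'd''](k'k''(k'+k'')τ, 0) · ϑ[(k'w + c' + c'')/(k'+k''), d' + d'']((k'+k'')τ, (k'+k'')z). (The multiplication formula for shifted theta functions specialized to x' = x^{k'}, x'' = x^{k''}.) -/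

import Mathlib

open Complex Matrix BigOperators Real

noncomputable section

/-- The quadratic form `vᵀ τ v = ∑_{j,k} τ_{jk} v_j v_k`. -/
def qf {g : ℕ} (τ : Matrix (Fin g) (Fin g) ℂ) (v : Fin g → ℂ) : ℂ :=
  ∑ j, ∑ k, v j * τ j k * v k

/-- The pairing `vᵀ w = ∑_j v_j w_j`. -/
def dotc {g : ℕ} (v w : Fin g → ℂ) : ℂ := ∑ j, v j * w j

/-- The Siegel upper half space `ℍ_g`. -/
def Siegel (g : ℕ) : Set (Matrix (Fin g) (Fin g) ℂ) :=
  {τ | τ.IsSymm ∧ (τ.map Complex.im).PosDef}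

/-- The shifted Riemann theta function
`ϑ[c,d](τ,z) = ∑_{n ∈ ℤ^g} exp(πi·(n+c)ᵀτ(n+c) + 2πi·(n+c)ᵀ(z+d))`. -/
def thetaS {g : ℕ} (c d : Fin g → ℝ) (τ : Matrix (Fin g) (Fin g) ℂ)
    (z : Fin g → ℂ) : ℂ :=
  ∑' n : Fin g → ℤ,
    Complex.exp ((π : ℂ) * I * qf τ (fun j => (n j : ℂ) + (c j : ℂ)) +
      2 * (π : ℂ) * I * dotc (fun j => (n j : ℂ) + (c j : ℂ)) (z + fun j => (d j : ℂ)))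

/-- One summand of the theta series. -/
def thTerm {g : ℕ} (c d : Fin g → ℝ) (M : Matrix (Fin g) (Fin g) ℂ)
    (Z : Fin g → ℂ) (n : Fin g → ℤ) : ℂ :=
  Complex.exp ((π : ℂ) * I * qf M (fun j => (n j : ℂ) + (c j : ℂ)) +
      2 * (π : ℂ) * I * dotc (fun j => (n j : ℂ) + (c j : ℂ)) (Z + fun j => (d j : ℂ)))

lemma thetaS_eq_tsum_thTerm {g : ℕ} (c d : Fin g → ℝ) (M : Matrix (Fin g) (Fin g) ℂ)
    (Z : Fin g → ℂ) : thetaS c d M Z = ∑' n : Fin g → ℤ, thTerm c d M Z n := rfl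

noncomputable section

-- one-dimensional summability
lemma summable_exp_neg_sq (t : ℝ) (ht : 0 < t) :
    Summable (fun n : ℤ => Real.exp (-t * (n:ℝ)^2)) := by
  have hgeo : Summable (fun n : ℕ => Real.exp (-t) ^ n) :=
    summable_geometric_of_lt_one (Real.exp_pos (-t)).le
      (Real.exp_lt_one_iff.2 (by linarith))
  have key : Summable (fun n : ℕ => Real.exp (-t * (n:ℝ)^2)) := by
    apply Summable.of_nonneg_of_le (fun n => (Real.exp_pos _).le) (fun n => ?_) hgeo
    rw [← Real.exp_nat_mul]
    apply Real.exp_le_exp.2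
    have h1 : (n:ℝ) ≤ (n:ℝ)^2 := by exact_mod_cast Nat.le_self_pow two_ne_zero n
    nlinarith [mul_le_mul_of_nonneg_left h1 ht.le]
  apply Summable.of_nat_of_neg <;> simpa using key

lemma summable_exp_int (α β c : ℝ) (hα : 0 < α) :
    Summable (fun n : ℤ => Real.exp (-α * ((n:ℝ)+c)^2 + β * |(n:ℝ)+c|)) := by
  have h := (summable_exp_neg_sq (α/4) (by linarith)).mul_left
      (Real.exp ((α/2)*c^2 + β^2/(2*α)))
  apply Summable.of_nonneg_of_le (fun n => (Real.exp_pos _).le) (fun n => ?_) h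
  rw [← Real.exp_add]
  apply Real.exp_le_exp.2
  set v := (n:ℝ) + c with hv
  set a := |v| with ha
  have h2α : (0:ℝ) < 2*α := by linarith
  have hv2 : a^2 = v^2 := _root_.sq_abs v
  have h1 : β * a ≤ (α/2)*v^2 + β^2/(2*α) := by
    have hr : α/2*v^2 + β^2/(2*α) = (α^2*a^2 + β^2)/(2*α) := by
      rw [hv2]; field_simp
    rw [hr, le_div_iff₀ h2α]
    nlinarith [sq_nonneg (α*a - β)]
  have hn : (n:ℝ) = v - c := by rw [hv]; ring
  have h2 : (n:ℝ)^2 ≤ 2*v^2 + 2*c^2 := by rw [hn]; nlinarith [sq_nonneg (v+c)]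
  have h3 : -(α/2)*v^2 ≤ -(α/4)*(n:ℝ)^2 + (α/2)*c^2 := by
    nlinarith [mul_le_mul_of_nonneg_left h2 (by linarith : (0:ℝ) ≤ α/4)]
  linarith

lemma summable_pi_prod : ∀ {g : ℕ} (F : Fin g → ℤ → ℝ), (∀ j n, 0 ≤ F j n) →
    (∀ j, Summable (F j)) → Summable (fun n : Fin g → ℤ => ∏ j, F j (n j)) := by
  intro g
  induction g with
  | zero => intro F _ _; exact Summable.of_finite
  | succ g ih =>
    intro F h0 hs
    have h := ((hs 0).mul_of_nonneg (ih (fun j => F j.succ) (fun j n => h0 _ _)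
      (fun j => hs _)) (fun n => h0 _ _) (fun p => Finset.prod_nonneg fun j _ => h0 _ _))
    rw [← (Fin.consEquiv (fun _ : Fin (g+1) => ℤ)).summable_iff]
    apply h.congr
    intro p
    simp only [Fin.consEquiv_apply, Function.comp]
    rw [Fin.prod_univ_succ]
    simp
lemma posdef_lower {g : ℕ} (hg : 0 < g) (Y : Matrix (Fin g) (Fin g) ℝ) (hY : Y.PosDef) :
    ∃ ε > 0, ∀ v : Fin g → ℝ, ε * (∑ j, (v j)^2) ≤ ∑ j, ∑ k, v j * Y j k * v k := by
  haveI : NeZero g := ⟨hg.ne'⟩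
  set Q : (Fin g → ℝ) → ℝ := fun v => ∑ j, ∑ k, v j * Y j k * v k with hQ
  have hQpos : ∀ v : Fin g → ℝ, v ≠ 0 → 0 < Q v := by
    intro v hv
    have := hY.dotProduct_mulVec_pos hv
    simpa [Q, dotProduct, mulVec, Finset.mul_sum, mul_assoc] using this
  have hc : Continuous Q := by
    apply continuous_finset_sum; intro j _
    apply continuous_finset_sum; intro k _
    exact ((continuous_apply j).mul continuous_const).mul (continuous_apply k)
  have hne : (Metric.sphere (0 : Fin g → ℝ) 1).Nonempty :=
    NormedSpace.sphere_nonempty.mpr zero_le_one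
  obtain ⟨u, hu, hmin'⟩ := (isCompact_sphere (0 : Fin g → ℝ) 1).exists_isMinOn hne
    hc.continuousOn
  have hmin : ∀ x ∈ Metric.sphere (0 : Fin g → ℝ) 1, Q u ≤ Q x := fun x hx => hmin' hx
  have hunorm : ‖u‖ = 1 := by simpa using hu
  have hune : u ≠ 0 := by
    intro h; rw [h] at hunorm; simp at hunorm
  have hε₀ : 0 < Q u := hQpos u hune
  have hscale : ∀ (t : ℝ) (v : Fin g → ℝ), Q (t • v) = t^2 * Q v := by
    intro t v
    simp only [Q, Finset.mul_sum]
    refine Finset.sum_congr rfl fun j _ => Finset.sum_congr rfl fun k _ => ?_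
    simp only [Pi.smul_apply, smul_eq_mul]; ring
  have hlow : ∀ v : Fin g → ℝ, Q u * ‖v‖^2 ≤ Q v := by
    intro v
    rcases eq_or_ne v 0 with rfl | hv
    · simp [Q]
    · have hvn : (0:ℝ) < ‖v‖ := norm_pos_iff.mpr hv
      have hu' : (‖v‖⁻¹ • v) ∈ Metric.sphere (0 : Fin g → ℝ) 1 := by
        simp [norm_smul, abs_of_pos (inv_pos.mpr hvn), inv_mul_cancel₀ hvn.ne']
      have h1 := hmin _ hu'
      have h2 : Q v = ‖v‖^2 * Q (‖v‖⁻¹ • v) := by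
        rw [hscale]
        field_simp
      rw [h2]
      nlinarith [sq_nonneg ‖v‖]
  refine ⟨Q u / g, div_pos hε₀ (by exact_mod_cast hg), fun v => ?_⟩
  have hsum : ∑ j, (v j)^2 ≤ (g : ℝ) * ‖v‖^2 := by
    calc ∑ j, (v j)^2 ≤ ∑ _j : Fin g, ‖v‖^2 := by
          apply Finset.sum_le_sum; intro j _
          have := norm_le_pi_norm v j
          have h0 : |v j| ≤ ‖v‖ := by simpa using this
          nlinarith [abs_nonneg (v j), _root_.sq_abs (v j)]
      _ = (g : ℝ) * ‖v‖^2 := by simp [Finset.sum_const, mul_comm]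
  have := hlow v
  have hg' : (0:ℝ) < g := by exact_mod_cast hg
  calc Q u / g * ∑ j, (v j)^2 ≤ Q u / g * ((g:ℝ) * ‖v‖^2) := by
        apply mul_le_mul_of_nonneg_left hsum (le_of_lt (div_pos hε₀ hg'))
    _ = Q u * ‖v‖^2 := by field_simp
    _ ≤ Q v := hlow v

lemma qf_im_real {g : ℕ} (τ : Matrix (Fin g) (Fin g) ℂ) (v : Fin g → ℝ) :
    (qf τ (fun j => (v j : ℂ))).im = ∑ j, ∑ k, v j * (τ j k).im * v k := by
  simp only [qf, Complex.im_sum]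
  refine Finset.sum_congr rfl fun j _ => Finset.sum_congr rfl fun k _ => ?_
  simp [Complex.mul_im, Complex.mul_re]

lemma dotc_im_real {g : ℕ} (v : Fin g → ℝ) (w : Fin g → ℂ) :
    (dotc (fun j => (v j : ℂ)) w).im = ∑ j, v j * (w j).im := by
  simp only [dotc, Complex.im_sum]
  refine Finset.sum_congr rfl fun j _ => ?_
  simp [Complex.mul_im]

lemma theta_term_norm {g : ℕ} (τ : Matrix (Fin g) (Fin g) ℂ) (c d : Fin g → ℝ)
    (z : Fin g → ℂ) (n : Fin g → ℤ) :
    ‖Complex.exp ((π : ℂ) * I * qf τ (fun j => (n j : ℂ) + (c j : ℂ)) +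
      2 * (π : ℂ) * I * dotc (fun j => (n j : ℂ) + (c j : ℂ)) (z + fun j => (d j : ℂ)))‖
    = Real.exp (-(π * (∑ j, ∑ k, ((n j : ℝ) + c j) * (τ j k).im * ((n k : ℝ) + c k)))
        - 2 * π * (∑ j, ((n j : ℝ) + c j) * (z j).im)) := by
  have harg : (fun j => (n j : ℂ) + (c j : ℂ)) = (fun j => (((n j : ℝ) + c j : ℝ) : ℂ)) := by
    funext j; push_cast; ring
  rw [Complex.norm_exp]
  congr 1
  rw [harg, Complex.add_re]
  have h1 : ∀ w : ℂ, ((π : ℂ) * I * w).re = -(π * w.im) := by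
    intro w; simp [Complex.mul_re, Complex.mul_im]
  have h2 : ∀ w : ℂ, (2 * (π : ℂ) * I * w).re = -(2 * π * w.im) := by
    intro w; simp [Complex.mul_re, Complex.mul_im]
  rw [h1, h2, qf_im_real, dotc_im_real]
  have : ∑ j, ((n j : ℝ) + c j) * ((z + fun j => (d j : ℂ)) j).im
      = ∑ j, ((n j : ℝ) + c j) * (z j).im := by
    refine Finset.sum_congr rfl fun j _ => ?_
    simp
  rw [this]
  ring

lemma theta_norm_summable {g : ℕ} (τ : Matrix (Fin g) (Fin g) ℂ)
    (ε : ℝ) (hε : 0 < ε)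
    (hQ : ∀ v : Fin g → ℝ, ε * ∑ j, (v j)^2 ≤ ∑ j, ∑ k, v j * (τ j k).im * v k)
    (c d : Fin g → ℝ) (z : Fin g → ℂ) :
    Summable (fun n : Fin g → ℤ =>
      ‖Complex.exp ((π : ℂ) * I * qf τ (fun j => (n j : ℂ) + (c j : ℂ)) +
        2 * (π : ℂ) * I * dotc (fun j => (n j : ℂ) + (c j : ℂ)) (z + fun j => (d j : ℂ)))‖) := by
  set F : Fin g → ℤ → ℝ := fun j m =>
    Real.exp (-(π*ε) * ((m:ℝ) + c j)^2 + (2*π*|(z j).im|) * |(m:ℝ) + c j|) with hF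
  have hFs : Summable (fun n : Fin g → ℤ => ∏ j, F j (n j)) :=
    summable_pi_prod F (fun j m => (Real.exp_pos _).le)
      (fun j => summable_exp_int (π*ε) _ _ (mul_pos Real.pi_pos hε))
  apply Summable.of_nonneg_of_le (fun n => norm_nonneg _) (fun n => ?_) hFs
  rw [theta_term_norm]
  have hprod : ∏ j, F j (n j) = Real.exp (∑ j,
      (-(π*ε) * ((n j : ℝ) + c j)^2 + (2*π*|(z j).im|) * |(n j : ℝ) + c j|)) :=
    (Real.exp_sum _ _).symm
  rw [hprod]
  apply Real.exp_le_exp.2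
  rw [Finset.sum_add_distrib]
  have hsq : -(π * (∑ j, ∑ k, ((n j : ℝ) + c j) * (τ j k).im * ((n k : ℝ) + c k)))
      ≤ ∑ j, -(π*ε) * ((n j : ℝ) + c j)^2 := by
    have h1 := hQ (fun j => (n j : ℝ) + c j)
    have h2 := mul_le_mul_of_nonneg_left h1 Real.pi_pos.le
    have h3 : ∑ j, -(π*ε) * ((n j : ℝ) + c j)^2
        = -(π * (ε * ∑ j, ((n j : ℝ) + c j)^2)) := by
      rw [Finset.mul_sum, Finset.mul_sum, ← Finset.sum_neg_distrib]
      refine Finset.sum_congr rfl fun j _ => by ring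
    rw [h3]
    exact neg_le_neg h2
  have hlin : -(2*π*(∑ j, ((n j : ℝ) + c j) * (z j).im))
      ≤ ∑ j, (2*π*|(z j).im|) * |(n j : ℝ) + c j| := by
    have he : -(2*π*(∑ j, ((n j : ℝ) + c j) * (z j).im))
        = ∑ j, (-(2*π)) * (((n j : ℝ) + c j) * (z j).im) := by
      rw [Finset.mul_sum, ← Finset.sum_neg_distrib]
      refine Finset.sum_congr rfl fun j _ => by ring
    rw [he]
    refine Finset.sum_le_sum fun j _ => ?_
    have h4 := neg_le_abs (((n j : ℝ) + c j) * (z j).im)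
    calc (-(2*π)) * (((n j : ℝ) + c j) * (z j).im)
        = 2*π * (-((((n j : ℝ) + c j) * (z j).im))) := by ring
      _ ≤ 2*π*|(((n j : ℝ) + c j) * (z j).im)| :=
          mul_le_mul_of_nonneg_left h4 (by positivity)
      _ = (2*π*|(z j).im|) * |(n j : ℝ) + c j| := by rw [abs_mul]; ring
  linarith

def bf {g : ℕ} (τ : Matrix (Fin g) (Fin g) ℂ) (v w : Fin g → ℂ) : ℂ :=
  ∑ j, ∑ k, v j * τ j k * w k

variable {g : ℕ} (τ : Matrix (Fin g) (Fin g) ℂ)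

lemma qf_comb (x y : ℂ) (a b : Fin g → ℂ) :
    qf τ (fun j => x * a j + y * b j)
      = x^2 * qf τ a + x*y * bf τ a b + y*x * bf τ b a + y^2 * qf τ b := by
  simp only [qf, bf, Finset.mul_sum, ← Finset.sum_add_distrib]
  exact Finset.sum_congr rfl fun j _ => Finset.sum_congr rfl fun k _ => by ring

lemma bf_comm (hτ : τ.IsSymm) (a b : Fin g → ℂ) : bf τ a b = bf τ b a := by
  have hs : ∀ p q, τ p q = τ q p := fun p q => by
    conv_lhs => rw [← hτ]
    rfl
  rw [bf, Finset.sum_comm]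
  refine Finset.sum_congr rfl fun k _ => Finset.sum_congr rfl fun j _ => ?_
  rw [hs j k]; ring

lemma qf_smul_vec (t : ℂ) (v : Fin g → ℂ) :
    qf τ (fun j => t * v j) = t^2 * qf τ v := by
  simp only [qf, Finset.mul_sum]
  exact Finset.sum_congr rfl fun j _ => Finset.sum_congr rfl fun k _ => by ring

lemma qf_smul_mat (t : ℂ) (v : Fin g → ℂ) : qf (t • τ) v = t * qf τ v := by
  simp only [qf, Finset.mul_sum, Matrix.smul_apply, smul_eq_mul]
  exact Finset.sum_congr rfl fun j _ => Finset.sum_congr rfl fun k _ => by ring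

lemma dotc_comb (x y u v : ℂ) (a b cc dd : Fin g → ℂ) :
    dotc (fun j => x * a j + y * b j) (fun j => u * cc j + v * dd j)
      = x*u * dotc a cc + x*v * dotc a dd + y*u * dotc b cc + y*v * dotc b dd := by
  simp only [dotc, Finset.mul_sum, ← Finset.sum_add_distrib]
  exact Finset.sum_congr rfl fun j _ => by ring

lemma dotc_smul_left (t : ℂ) (v w : Fin g → ℂ) :
    dotc (fun j => t * v j) w = t * dotc v w := by
  simp only [dotc, Finset.mul_sum]
  exact Finset.sum_congr rfl fun j _ => by ring

lemma dotc_add_right (v w1 w2 : Fin g → ℂ) :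
    dotc v (fun j => w1 j + w2 j) = dotc v w1 + dotc v w2 := by
  simp only [dotc, ← Finset.sum_add_distrib]
  exact Finset.sum_congr rfl fun j _ => by ring

lemma dotc_add_left (a b w : Fin g → ℂ) :
    dotc (fun j => a j + b j) w = dotc a w + dotc b w := by
  simp only [dotc, ← Finset.sum_add_distrib]
  exact Finset.sum_congr rfl fun j _ => by ring

lemma dotc_smul_right (t : ℂ) (v w : Fin g → ℂ) :
    dotc v (fun j => t * w j) = t * dotc v w := by
  simp only [dotc, Finset.mul_sum]
  exact Finset.sum_congr rfl fun j _ => by ring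

lemma exponent_identity (hτ : τ.IsSymm) (K1 K2 : ℂ)
    (h1 : K1 ≠ 0) (h2 : K2 ≠ 0) (hS : K1 + K2 ≠ 0)
    (a b dA dB z : Fin g → ℂ) :
    ((π:ℂ)*I * (qf τ a / K1) + 2*(π:ℂ)*I*(dotc a z + dotc a dA / K1))
      + ((π:ℂ)*I * (qf τ b / K2) + 2*(π:ℂ)*I*(dotc b z + dotc b dB / K2))
    = ((π:ℂ)*I * (qf τ (fun j => K2 * a j - K1 * b j) / (K1*K2*(K1+K2)))
        + 2*(π:ℂ)*I*(dotc (fun j => K2 * a j - K1 * b j)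
            (fun j => K2 * dA j - K1 * dB j) / (K1*K2*(K1+K2))))
      + ((π:ℂ)*I * (qf τ (fun j => a j + b j) / (K1+K2))
        + 2*(π:ℂ)*I*(dotc a z + dotc b z
            + dotc (fun j => a j + b j) (fun j => dA j + dB j) / (K1+K2))) := by
  have e1 : (fun j => K2 * a j - K1 * b j) = (fun j => K2 * a j + (-K1) * b j) := by
    funext j; ring
  have e2 : (fun j => K2 * dA j - K1 * dB j) = (fun j => K2 * dA j + (-K1) * dB j) := by
    funext j; ring
  have e3 : (fun j => a j + b j) = (fun j => (1:ℂ) * a j + (1:ℂ) * b j) := by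
    funext j; ring
  have e4 : (fun j => dA j + dB j) = (fun j => (1:ℂ) * dA j + (1:ℂ) * dB j) := by
    funext j; ring
  rw [e1, e2, e3, e4, qf_comb, qf_comb, dotc_comb, dotc_comb,
    bf_comm τ hτ b a]
  field_simp
  ring

end

noncomputable section

def thetaEquiv (g k' k'' : ℕ) (h : 0 < k' + k'') :
    ((Fin g → Fin (k' + k'')) × ((Fin g → ℤ) × (Fin g → ℤ)))
      ≃ ((Fin g → ℤ) × (Fin g → ℤ)) where
  toFun x :=
    (fun j => x.2.2 j + (k'' : ℤ) * x.2.1 j + (x.1 j : ℤ),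
     fun j => x.2.2 j - (k' : ℤ) * x.2.1 j)
  invFun p :=
    (fun j => ⟨((p.1 j - p.2 j) % (k' + k'' : ℕ)).toNat, by
        have hS : (0:ℤ) < (k' + k'' : ℕ) := by exact_mod_cast h
        have h1 := Int.emod_nonneg (p.1 j - p.2 j) hS.ne'
        have h2 := Int.emod_lt_of_pos (p.1 j - p.2 j) hS
        omega⟩,
     fun j => (p.1 j - p.2 j) / (k' + k'' : ℕ),
     fun j => p.2 j + (k' : ℤ) * ((p.1 j - p.2 j) / (k' + k'' : ℕ)))
  left_inv := by
    rintro ⟨w, m, n⟩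
    have hS : (0:ℤ) < (k' + k'' : ℕ) := by exact_mod_cast h
    have key : ∀ j, (n j + (k'' : ℤ) * m j + (w j : ℤ)) - (n j - (k' : ℤ) * m j)
        = (w j : ℤ) + ((k' + k'' : ℕ) : ℤ) * m j := by intro j; push_cast; ring
    have hw : ∀ j, ((n j + (k'' : ℤ) * m j + (w j : ℤ)) - (n j - (k' : ℤ) * m j))
        % (k' + k'' : ℕ) = (w j : ℤ) := by
      intro j
      rw [key j, Int.add_mul_emod_self_left]
      exact Int.emod_eq_of_lt (by positivity) (by exact_mod_cast (w j).2)
    have hm : ∀ j, ((n j + (k'' : ℤ) * m j + (w j : ℤ)) - (n j - (k' : ℤ) * m j))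
        / (k' + k'' : ℕ) = m j := by
      intro j
      rw [key j, Int.add_mul_ediv_left _ _ hS.ne']
      rw [Int.ediv_eq_zero_of_lt (by positivity) (by exact_mod_cast (w j).2)]
      ring
    refine Prod.ext ?_ (Prod.ext ?_ ?_)
    · funext j
      apply Fin.ext
      simp only [hw j]
      simp
    · funext j
      have h5 := hm j; push_cast at h5 ⊢; rw [h5]
    · funext j
      have h5 := hm j; push_cast at h5 ⊢; rw [h5]; ring
  right_inv := by
    rintro ⟨p, q⟩
    have hS : (0:ℤ) < (k' + k'' : ℕ) := by exact_mod_cast h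
    have hsplit : ∀ j, ((k' + k'' : ℕ) : ℤ) * ((p j - q j) / (k' + k'' : ℕ))
        + (p j - q j) % (k' + k'' : ℕ) = p j - q j := fun j => Int.mul_ediv_add_emod _ _
    refine Prod.ext ?_ ?_
    · funext j
      have h1 := Int.emod_nonneg (p j - q j) hS.ne'
      have h2 := hsplit j
      simp only [Int.toNat_of_nonneg h1]
      push_cast [Int.toNat_of_nonneg h1]
      push_cast at h2
      linarith
    · funext j; ring



lemma thetaEquiv_apply (g k' k'' : ℕ) (h : 0 < k' + k'')
    (w : Fin g → Fin (k' + k'')) (m n : Fin g → ℤ) :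
    thetaEquiv g k' k'' h ⟨w, m, n⟩
      = (fun j => n j + (k'' : ℤ) * m j + (w j : ℤ), fun j => n j - (k' : ℤ) * m j) := rfl

lemma dotc_zero_right {g : ℕ} (v : Fin g → ℂ) : dotc v 0 = 0 := by simp [dotc]

lemma thTerm_normalize {g : ℕ} (τ : Matrix (Fin g) (Fin g) ℂ) (t : ℕ) (ht : 0 < t)
    (c cnum d : Fin g → ℝ) (hc : ∀ j, c j = cnum j / (t : ℝ))
    (zz Z : Fin g → ℂ) (hZ : Z = (t : ℂ) • zz) (n : Fin g → ℤ) :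
    thTerm c d ((t : ℂ) • τ) Z n
      = Complex.exp ((π:ℂ)*I * (qf τ (fun j => (t:ℂ) * (n j : ℂ) + (cnum j : ℂ)) / (t:ℂ))
        + 2*(π:ℂ)*I*(dotc (fun j => (t:ℂ) * (n j : ℂ) + (cnum j : ℂ)) zz
            + dotc (fun j => (t:ℂ) * (n j : ℂ) + (cnum j : ℂ)) (fun j => (d j : ℂ)) / (t:ℂ))) := by
  have hT : (t:ℂ) ≠ 0 := Nat.cast_ne_zero.mpr ht.ne'
  have hvec : (fun j => (n j : ℂ) + ((c j : ℝ) : ℂ))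
      = fun j => ((t:ℂ))⁻¹ * ((t:ℂ) * (n j : ℂ) + (cnum j : ℂ)) := by
    funext j; rw [hc j]; push_cast; field_simp
  have hq : qf ((t:ℂ) • τ) (fun j => ((t:ℂ))⁻¹ * ((t:ℂ) * (n j : ℂ) + (cnum j : ℂ)))
      = ((t:ℂ)⁻¹)^2 * ((t:ℂ) * qf τ (fun j => (t:ℂ) * (n j : ℂ) + (cnum j : ℂ))) := by
    rw [qf_smul_vec, qf_smul_mat]
  have hd : dotc (fun j => ((t:ℂ))⁻¹ * ((t:ℂ) * (n j : ℂ) + (cnum j : ℂ)))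
        (((t : ℂ) • zz) + fun j => (d j : ℂ))
      = (t:ℂ)⁻¹ * ((t:ℂ) * dotc (fun j => (t:ℂ) * (n j : ℂ) + (cnum j : ℂ)) zz
          + dotc (fun j => (t:ℂ) * (n j : ℂ) + (cnum j : ℂ)) (fun j => (d j : ℂ))) := by
    simp only [dotc, Finset.mul_sum, ← Finset.sum_add_distrib]
    refine Finset.sum_congr rfl fun j _ => ?_
    simp only [Pi.add_apply, Pi.smul_apply, smul_eq_mul]
    ring
  unfold thTerm
  rw [hZ, hvec, hq, hd]
  congr 1
  field_simp

set_option maxHeartbeats 2000000 in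
/-- the multiplication formula for shifted theta functions specialized
to `x' = x^{k'}`, `x'' = x^{k''}` (i.e. `z' = k'z`, `z'' = k''z`):
`ϑ[c'/k', d'](k'τ, k'z) · ϑ[c''/k'', d''](k''τ, k''z)
  = ∑_{w ∈ {0,…,k'+k''−1}^g}
      ϑ[(k'k''w + k''c' − k'c'')/(k'k''(k'+k'')), k''d' − k'd''](k'k''(k'+k'')τ, 0)
      · ϑ[(k'w + c' + c'')/(k'+k''), d' + d'']((k'+k'')τ, (k'+k'')z)`. -/
theorem theta_multiplication_formula_diagonal (g k' k'' : ℕ)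
    (hg : 0 < g) (hk' : 0 < k') (hk'' : 0 < k'')
    (τ : Matrix (Fin g) (Fin g) ℂ) (hτ : τ ∈ Siegel g)
    (c' d' c'' d'' : Fin g → ℝ) (z : Fin g → ℂ) :
    thetaS (fun j => c' j / (k' : ℝ)) d' ((k' : ℂ) • τ) ((k' : ℂ) • z)
      * thetaS (fun j => c'' j / (k'' : ℝ)) d'' ((k'' : ℂ) • τ) ((k'' : ℂ) • z)
    = ∑ w : Fin g → Fin (k' + k''),
        thetaS
          (fun j => ((k' : ℝ) * (k'' : ℝ) * ((w j : ℕ) : ℝ)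
              + (k'' : ℝ) * c' j - (k' : ℝ) * c'' j)
            / ((k' : ℝ) * (k'' : ℝ) * ((k' : ℝ) + (k'' : ℝ))))
          (fun j => (k'' : ℝ) * d' j - (k' : ℝ) * d'' j)
          (((k' : ℂ) * (k'' : ℂ) * ((k' : ℂ) + (k'' : ℂ))) • τ)
          0
        * thetaS
            (fun j => ((k' : ℝ) * ((w j : ℕ) : ℝ) + c' j + c'' j)
              / ((k' : ℝ) + (k'' : ℝ)))
            (fun j => d' j + d'' j)
            (((k' : ℂ) + (k'' : ℂ)) • τ)
            (((k' : ℂ) + (k'' : ℂ)) • z) := by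
  obtain ⟨hsym, hpos⟩ := hτ
  have hK1 : (k':ℂ) ≠ 0 := Nat.cast_ne_zero.mpr hk'.ne'
  have hK2 : (k'':ℂ) ≠ 0 := Nat.cast_ne_zero.mpr hk''.ne'
  have hSnat : 0 < k' + k'' := by omega
  have hN3 : 0 < k' * k'' * (k' + k'') := by positivity
  have hScast : (k':ℂ) + (k'':ℂ) = ((k' + k'' : ℕ) : ℂ) := by push_cast; ring
  have hK3cast : (k':ℂ) * (k'':ℂ) * ((k':ℂ) + (k'':ℂ))
      = ((k' * k'' * (k' + k'') : ℕ) : ℂ) := by push_cast; ring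
  have hS : (k':ℂ) + (k'':ℂ) ≠ 0 := by
    rw [hScast]; exact Nat.cast_ne_zero.mpr hSnat.ne'
  obtain ⟨ε, hε, hQτ'⟩ := posdef_lower hg (τ.map Complex.im) hpos
  have hQτ : ∀ v : Fin g → ℝ, ε * ∑ j, (v j)^2 ≤ ∑ j, ∑ k, v j * (τ j k).im * v k := by
    intro v; simpa [Matrix.map_apply] using hQτ' v
  have hQnat : ∀ t : ℕ, 0 < t → ∀ v : Fin g → ℝ,
      ε * ∑ j, (v j)^2 ≤ ∑ j, ∑ k, v j * (((t:ℂ) • τ) j k).im * v k := by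
    intro t ht v
    have base := hQτ v
    have h0 : (0:ℝ) ≤ ∑ j, ∑ k, v j * (τ j k).im * v k := le_trans (by positivity) base
    have heq : ∑ j, ∑ k, v j * (((t:ℂ) • τ) j k).im * v k
        = (t:ℝ) * ∑ j, ∑ k, v j * (τ j k).im * v k := by
      rw [Finset.mul_sum]
      refine Finset.sum_congr rfl fun j _ => ?_
      rw [Finset.mul_sum]
      refine Finset.sum_congr rfl fun k _ => ?_
      simp only [Matrix.smul_apply, smul_eq_mul, Complex.mul_im,
        Complex.natCast_re, Complex.natCast_im]
      ring
    rw [heq]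
    have ht1 : (1:ℝ) ≤ (t:ℝ) := by exact_mod_cast ht
    nlinarith
  have hsum : ∀ (tn : ℕ), 0 < tn → ∀ (c d : Fin g → ℝ) (Z : Fin g → ℂ),
      Summable (fun n : Fin g → ℤ => ‖thTerm c d ((tn:ℂ) • τ) Z n‖) := by
    intro tn htn c d Z
    exact theta_norm_summable ((tn:ℂ) • τ) ε hε (hQnat tn htn) c d Z
  rw [hK3cast, hScast]
  simp only [thetaS_eq_tsum_thTerm]
  rw [tsum_mul_tsum_of_summable_norm (hsum k' hk' _ _ _) (hsum k'' hk'' _ _ _)]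
  set f1 := thTerm (fun j => c' j / (k':ℝ)) d' ((k':ℂ) • τ) ((k':ℂ) • z) with hf1
  set f2 := thTerm (fun j => c'' j / (k'':ℝ)) d'' ((k'':ℂ) • τ) ((k'':ℂ) • z) with hf2
  set F3 := fun (w : Fin g → Fin (k'+k'')) => thTerm
      (fun j => ((k':ℝ) * (k'':ℝ) * ((w j : ℕ):ℝ) + (k'':ℝ) * c' j - (k':ℝ) * c'' j)
        / ((k':ℝ) * (k'':ℝ) * ((k':ℝ) + (k'':ℝ))))
      (fun j => (k'':ℝ) * d' j - (k':ℝ) * d'' j)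
      (((k' * k'' * (k' + k'') : ℕ):ℂ) • τ) 0 with hF3
  set F4 := fun (w : Fin g → Fin (k'+k'')) => thTerm
      (fun j => ((k':ℝ) * ((w j:ℕ):ℝ) + c' j + c'' j) / ((k':ℝ) + (k'':ℝ)))
      (fun j => d' j + d'' j)
      (((k'+k'':ℕ):ℂ) • τ) (((k'+k'':ℕ):ℂ) • z) with hF4
  show (∑' p : (Fin g → ℤ) × (Fin g → ℤ), f1 p.1 * f2 p.2)
      = ∑ w : Fin g → Fin (k'+k''), (∑' m : Fin g → ℤ, F3 w m) * (∑' n : Fin g → ℤ, F4 w n)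
  have hsum1 : Summable (fun n => ‖f1 n‖) := hsum k' hk' _ _ _
  have hsum2 : Summable (fun n => ‖f2 n‖) := hsum k'' hk'' _ _ _
  have h3 : ∀ w, Summable (fun n => ‖F3 w n‖) := fun w => hsum _ hN3 _ _ _
  have h4 : ∀ w, Summable (fun n => ‖F4 w n‖) := fun w => hsum _ hSnat _ _ _
  have hFl : Summable (fun p : (Fin g → ℤ) × (Fin g → ℤ) => f1 p.1 * f2 p.2) :=
    summable_mul_of_summable_norm hsum1 hsum2
  have key : ∀ (w : Fin g → Fin (k'+k'')) (m n : Fin g → ℤ),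
      f1 (fun j => n j + (k'':ℤ) * m j + ((w j : ℕ) : ℤ))
        * f2 (fun j => n j - (k':ℤ) * m j) = F3 w m * F4 w n := by
    intro w m n
    have hc3 : ∀ j : Fin g, ((k':ℝ) * (k'':ℝ) * ((w j : ℕ):ℝ) + (k'':ℝ) * c' j - (k':ℝ) * c'' j)
        / ((k':ℝ) * (k'':ℝ) * ((k':ℝ) + (k'':ℝ)))
        = ((k':ℝ) * (k'':ℝ) * ((w j : ℕ):ℝ) + (k'':ℝ) * c' j - (k':ℝ) * c'' j)
          / ((k' * k'' * (k' + k'') : ℕ) : ℝ) := by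
      intro j; push_cast; ring
    have hc4 : ∀ j : Fin g, ((k':ℝ) * ((w j:ℕ):ℝ) + c' j + c'' j) / ((k':ℝ) + (k'':ℝ))
        = ((k':ℝ) * ((w j:ℕ):ℝ) + c' j + c'' j) / ((k' + k'' : ℕ) : ℝ) := by
      intro j; push_cast; ring
    simp only [hf1, hf2, hF3, hF4]
    rw [thTerm_normalize τ k' hk' (fun j => c' j / (k':ℝ)) c' d' (fun j => rfl) z
        ((k':ℂ) • z) rfl]
    rw [thTerm_normalize τ k'' hk'' (fun j => c'' j / (k'':ℝ)) c'' d'' (fun j => rfl) z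
        ((k'':ℂ) • z) rfl]
    rw [thTerm_normalize τ (k'*k''*(k'+k'')) hN3 _
        (fun j => (k':ℝ) * (k'':ℝ) * ((w j:ℕ):ℝ) + (k'':ℝ) * c' j - (k':ℝ) * c'' j)
        (fun j => (k'':ℝ) * d' j - (k':ℝ) * d'' j) hc3 0 0 (by simp)]
    rw [thTerm_normalize τ (k'+k'') hSnat _
        (fun j => (k':ℝ) * ((w j:ℕ):ℝ) + c' j + c'' j)
        (fun j => d' j + d'' j) hc4 z (((k'+k'':ℕ):ℂ) • z) rfl]
    rw [← Complex.exp_add, ← Complex.exp_add]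
    congr 1
    have hA3 : (fun j => ((k' * k'' * (k' + k'') : ℕ) : ℂ) * ((m j : ℤ) : ℂ)
          + ((((k':ℝ) * (k'':ℝ) * ((w j : ℕ):ℝ) + (k'':ℝ) * c' j - (k':ℝ) * c'' j) : ℝ) : ℂ))
        = (fun j => ((k'':ℕ):ℂ) * (((k':ℕ):ℂ) * (((n j + (k'':ℤ) * m j + ((w j:ℕ):ℤ)) : ℤ) : ℂ) + ((c' j : ℝ) : ℂ))
            - ((k':ℕ):ℂ) * (((k'':ℕ):ℂ) * (((n j - (k':ℤ) * m j) : ℤ) : ℂ) + ((c'' j : ℝ) : ℂ))) := by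
      funext j; push_cast; ring
    have hA4 : (fun j => ((k' + k'' : ℕ):ℂ) * ((n j : ℤ):ℂ) + ((((k':ℝ) * ((w j:ℕ):ℝ) + c' j + c'' j) : ℝ):ℂ))
        = (fun j => (((k':ℕ):ℂ) * (((n j + (k'':ℤ) * m j + ((w j:ℕ):ℤ)) : ℤ):ℂ) + ((c' j:ℝ):ℂ))
            + (((k'':ℕ):ℂ) * (((n j - (k':ℤ) * m j) : ℤ):ℂ) + ((c'' j:ℝ):ℂ))) := by
      funext j; push_cast; ring
    have hd3 : (fun j : Fin g => (((k'':ℝ) * d' j - (k':ℝ) * d'' j : ℝ):ℂ))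
        = (fun j => ((k'':ℕ):ℂ) * ((d' j : ℝ):ℂ) - ((k':ℕ):ℂ) * ((d'' j : ℝ):ℂ)) := by
      funext j; push_cast; ring
    have hd4 : (fun j : Fin g => ((d' j + d'' j : ℝ):ℂ)) = (fun j => ((d' j:ℝ):ℂ) + ((d'' j:ℝ):ℂ)) := by
      funext j; push_cast; ring
    rw [hA3, hA4, hd3, hd4, ← hK3cast, ← hScast, dotc_zero_right, zero_add,
      dotc_add_left (fun j => ((k':ℕ):ℂ) * (((n j + (k'':ℤ) * m j + ((w j:ℕ):ℤ)) : ℤ):ℂ) + ((c' j:ℝ):ℂ))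
        (fun j => ((k'':ℕ):ℂ) * (((n j - (k':ℤ) * m j) : ℤ):ℂ) + ((c'' j:ℝ):ℂ)) z]
    exact exponent_identity τ hsym (k':ℂ) (k'':ℂ) hK1 hK2 hS
      (fun j => ((k':ℕ):ℂ) * (((n j + (k'':ℤ) * m j + ((w j:ℕ):ℤ)) : ℤ):ℂ) + ((c' j:ℝ):ℂ))
      (fun j => ((k'':ℕ):ℂ) * (((n j - (k':ℤ) * m j) : ℤ):ℂ) + ((c'' j:ℝ):ℂ))
      (fun j => ((d' j:ℝ):ℂ)) (fun j => ((d'' j:ℝ):ℂ)) z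
  have this1 : ∀ q : (Fin g → Fin (k'+k'')) × ((Fin g → ℤ) × (Fin g → ℤ)),
      f1 ((thetaEquiv g k' k'' hSnat) q).1 * f2 ((thetaEquiv g k' k'' hSnat) q).2
        = F3 q.1 q.2.1 * F4 q.1 q.2.2 := by
    rintro ⟨w, m, n⟩
    rw [thetaEquiv_apply]
    exact key w m n
  have hGr : Summable (fun q : (Fin g → Fin (k'+k'')) × ((Fin g → ℤ) × (Fin g → ℤ)) =>
      F3 q.1 q.2.1 * F4 q.1 q.2.2) :=
    (((thetaEquiv g k' k'' hSnat).summable_iff).mpr hFl).congr this1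
  calc (∑' p : (Fin g → ℤ) × (Fin g → ℤ), f1 p.1 * f2 p.2)
      = ∑' q : (Fin g → Fin (k'+k'')) × ((Fin g → ℤ) × (Fin g → ℤ)),
          f1 ((thetaEquiv g k' k'' hSnat) q).1 * f2 ((thetaEquiv g k' k'' hSnat) q).2 :=
        (Equiv.tsum_eq (thetaEquiv g k' k'' hSnat) _).symm
    _ = ∑' q : (Fin g → Fin (k'+k'')) × ((Fin g → ℤ) × (Fin g → ℤ)),
          F3 q.1 q.2.1 * F4 q.1 q.2.2 := tsum_congr this1
    _ = ∑' w : Fin g → Fin (k'+k''), ∑' p : (Fin g → ℤ) × (Fin g → ℤ),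
          F3 w p.1 * F4 w p.2 := Summable.tsum_prod hGr
    _ = ∑ w : Fin g → Fin (k'+k''), ∑' p : (Fin g → ℤ) × (Fin g → ℤ),
          F3 w p.1 * F4 w p.2 := tsum_fintype _
    _ = ∑ w : Fin g → Fin (k'+k''), (∑' m : Fin g → ℤ, F3 w m) * (∑' n : Fin g → ℤ, F4 w n) := by
        refine Finset.sum_congr rfl fun w _ => ?_
        exact (tsum_mul_tsum_of_summable_norm (h3 w) (h4 w)).symm

end
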